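/- Weak threshold: fix k ∈ ℕ, and let n : ℕ → ℕ satisfy n(d) ≥ d for all d and log(n(d))/d → γ ∈ [0,∞] as d → ∞. Define, for d > k, F(d) := 2·Σ_{l ≥ 0, d-1-2l ≥ k} P[Lah(n(d),k)_{1/2} = d-1-2l], where Lah(n,k)_{1/2} is the r-Lah distribution with r = 1/2 (this quantity equals the ratio E[f_k(C_n^B)]/C(n,k) of the expected number of k-faces of the Weyl random cone of type B+ to its maximal value). Then F(d) → 1 as d → ∞ if γ < 1/(k + 1/2), and F(d) → 0 as d → ∞ if γ > 1/(k + 1/2). -/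

import Mathlib

open Finset Filter MeasureTheory

/-- r-Stirling numbers of the first kind. -/
noncomputable def stirFir (r : ℝ) : ℕ → ℕ → ℝ
  | 0, 0 => 1
  | 0, _ + 1 => 0
  | n + 1, 0 => ((n : ℝ) + r) * stirFir r n 0
  | n + 1, k + 1 => ((n : ℝ) + r) * stirFir r n (k + 1) + stirFir r n k

/-- r-Stirling numbers of the second kind. -/
noncomputable def stirSec (r : ℝ) : ℕ → ℕ → ℝ
  | 0, 0 => 1
  | 0, _ + 1 => 0
  | n + 1, 0 => r * stirSec r n 0
  | n + 1, k + 1 => ((k : ℝ) + 1 + r) * stirSec r n (k + 1) + stirSec r n k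

/-- The r-Lah number L(n,k)_r. -/
noncomputable def lahNum (r : ℝ) (n k : ℕ) : ℝ :=
  ∑ j ∈ Finset.Icc k n, stirFir r n j * stirSec r j k

/-- The probability mass function of the r-Lah distribution. -/
noncomputable def lahPMF (r : ℝ) (n k j : ℕ) : ℝ :=
  stirFir r n j * stirSec r j k / lahNum r n k

/-- The expectation of the r-Lah distribution. -/
noncomputable def lahExp (r : ℝ) (n k : ℕ) : ℝ :=
  (∑ j ∈ Finset.Icc k n, (j : ℝ) * stirFir r n j * stirSec r j k) / lahNum r n k

/-!
For `k < n` the alternating sum `A(n,k) = ∑ⱼ (-1)ʲ ⌈n,j⌉_r ⦃j,k⦄_r` vanishes, since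
`A(n+1,k) = (n-k) A(n,k) - A(n,k-1)`; so each parity class carries exactly half of the
distribution `J ~ Lah(n,k)_r`, whence `F(d) ≤ 2 P[J < d]` and `1 - F(d) ≤ 2 P[J ≥ d]`.
With `b = k + r`, the bounds `b^(j-k) ≤ ⦃j,k⦄_r ≤ b^j` and the generating function
`∑ⱼ ⌈n,j⌉_r yʲ = ∏_{i<n} (y + r + i)` give `E[x^J] ≤ 2 bᵏ exp (b (x - 1) H_n)` for large `n`,
where `H_n = ∑_{i<n} 1/(b + r + i) = log n + O(1)`. If `log n(d) ≈ β d` with `t = b β ≠ 1`,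
Chernoff's bound at `x = 2/(1 + t)`, for which `t (x - 1) < log x`, makes the relevant tail
decay geometrically in `d`.
-/

open Real

section Stirling

variable {r : ℝ}

lemma stirFir_eq_zero_of_lt {n j : ℕ} (h : n < j) : stirFir r n j = 0 := by
  induction n generalizing j with
  | zero => obtain ⟨j, rfl⟩ := Nat.exists_eq_add_of_lt h; rfl
  | succ n ih =>
    obtain ⟨j, rfl⟩ := Nat.exists_eq_add_of_lt (Nat.zero_lt_of_lt h)
    rw [zero_add, stirFir, ih (by omega), ih (by omega), mul_zero, add_zero]

lemma stirSec_eq_zero_of_lt {j k : ℕ} (h : j < k) : stirSec r j k = 0 := by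
  induction j generalizing k with
  | zero => obtain ⟨k, rfl⟩ := Nat.exists_eq_add_of_lt h; rfl
  | succ j ih =>
    obtain ⟨k, rfl⟩ := Nat.exists_eq_add_of_lt (Nat.zero_lt_of_lt h)
    rw [zero_add, stirSec, ih (by omega), ih (by omega), mul_zero, add_zero]

lemma stirFir_nonneg (hr : 0 ≤ r) (n j : ℕ) : 0 ≤ stirFir r n j := by
  induction n generalizing j with
  | zero => cases j <;> simp [stirFir]
  | succ n ih =>
    cases j with
    | zero => rw [stirFir]; have := ih 0; positivity
    | succ j => rw [stirFir]; have := ih j; have := ih (j + 1); positivity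

lemma stirSec_nonneg (hr : 0 ≤ r) (j k : ℕ) : 0 ≤ stirSec r j k := by
  induction j generalizing k with
  | zero => cases k <;> simp [stirSec]
  | succ j ih =>
    cases k with
    | zero => rw [stirSec]; have := ih 0; positivity
    | succ k => rw [stirSec]; have := ih k; have := ih (k + 1); positivity

lemma stirFir_self (n : ℕ) : stirFir r n n = 1 := by
  induction n with
  | zero => rfl
  | succ n ih => rw [stirFir, ih, stirFir_eq_zero_of_lt (Nat.lt_succ_self n), mul_zero, zero_add]

lemma stirSec_self (k : ℕ) : stirSec r k k = 1 := by
  induction k with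
  | zero => rfl
  | succ k ih => rw [stirSec, ih, stirSec_eq_zero_of_lt (Nat.lt_succ_self k), mul_zero, zero_add]

lemma stirSec_zero_right (j : ℕ) : stirSec r j 0 = r ^ j := by
  induction j with
  | zero => rfl
  | succ j ih => rw [stirSec, ih, pow_succ, mul_comm]

lemma sum_range_stirFir_mul_pow (x : ℝ) (n : ℕ) :
    ∑ j ∈ range (n + 1), stirFir r n j * x ^ j = ∏ i ∈ range n, (x + r + i) := by
  induction n with
  | zero => simp [stirFir]
  | succ n ih =>
    have hshift : ∑ j ∈ range (n + 1), stirFir r n (j + 1) * x ^ (j + 1)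
        = ∑ j ∈ range (n + 1), stirFir r n j * x ^ j - stirFir r n 0 := by
      rw [sum_range_succ, stirFir_eq_zero_of_lt (Nat.lt_succ_self n), sum_range_succ']
      ring
    have hterm : ∀ j, stirFir r (n + 1) (j + 1) * x ^ (j + 1)
        = (n + r) * (stirFir r n (j + 1) * x ^ (j + 1)) + x * (stirFir r n j * x ^ j) := by
      intro j; rw [stirFir]; ring
    rw [prod_range_succ, ← ih, sum_range_succ', sum_congr rfl fun j _ => hterm j, sum_add_distrib,
      ← mul_sum, ← mul_sum, hshift, stirFir]
    ring

lemma pow_sub_le_stirSec (hr : 0 ≤ r) {j k : ℕ} (h : k ≤ j) :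
    ((k : ℝ) + r) ^ (j - k) ≤ stirSec r j k := by
  induction j generalizing k with
  | zero => obtain rfl := Nat.le_zero.mp h; simp [stirSec]
  | succ j ih =>
    rcases h.eq_or_lt with rfl | hlt
    · rw [Nat.sub_self, pow_zero, stirSec_self]
    cases k with
    | zero => rw [stirSec_zero_right]; simp
    | succ k =>
      have hj := ih (Nat.lt_succ_iff.mp hlt)
      have := stirSec_nonneg hr j k
      have hpos : (0 : ℝ) ≤ (k : ℝ) + 1 + r := by positivity
      rw [stirSec, show j + 1 - (k + 1) = j - (k + 1) + 1 by omega, pow_succ]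
      push_cast at hj ⊢
      nlinarith [mul_le_mul_of_nonneg_left hj hpos]

-- Strengthened so that the induction on `j` closes: the bases `k + r` and `k + 1 + r`
-- differ by `1`.
lemma stirSec_succ_add_pow_le (hr : 0 ≤ r) {k : ℕ}
    (hk : ∀ j, stirSec r j k ≤ ((k : ℝ) + r) ^ j) (j : ℕ) :
    stirSec r j (k + 1) + ((k : ℝ) + r) ^ j ≤ ((k + 1 : ℕ) + r) ^ j := by
  induction j with
  | zero => simp [stirSec]
  | succ j ih =>
    have := hk j
    have hpos : (0 : ℝ) ≤ (k : ℝ) + 1 + r := by positivity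
    rw [stirSec, pow_succ, pow_succ]
    push_cast at ih ⊢
    nlinarith [mul_le_mul_of_nonneg_left ih hpos]

lemma stirSec_le_pow (hr : 0 ≤ r) (j k : ℕ) : stirSec r j k ≤ ((k : ℝ) + r) ^ j := by
  induction k generalizing j with
  | zero => simp [stirSec_zero_right]
  | succ k ih =>
    have := stirSec_succ_add_pow_le hr ih j
    have : 0 ≤ ((k : ℝ) + r) ^ j := by positivity
    linarith

end Stirling

section SignedLah

variable (r : ℝ)

noncomputable def signedLahNum (n k : ℕ) : ℝ :=
  ∑ j ∈ range (n + 1), (-1) ^ j * stirFir r n j * stirSec r j k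

lemma signedLahNum_succ (n k : ℕ) :
    signedLahNum r (n + 1) k = (n + r) * signedLahNum r n k
      - ∑ j ∈ range (n + 1), (-1) ^ j * stirFir r n j * stirSec r (j + 1) k := by
  have hterm : ∀ j, (-1) ^ (j + 1) * stirFir r (n + 1) (j + 1) * stirSec r (j + 1) k
      = (n + r) * ((-1) ^ (j + 1) * stirFir r n (j + 1) * stirSec r (j + 1) k)
        - (-1) ^ j * stirFir r n j * stirSec r (j + 1) k := by
    intro j; rw [stirFir]; ring
  have hshift : ∑ j ∈ range (n + 1), (-1) ^ (j + 1) * stirFir r n (j + 1) * stirSec r (j + 1) k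
      = signedLahNum r n k - stirFir r n 0 * stirSec r 0 k := by
    rw [signedLahNum, sum_range_succ, stirFir_eq_zero_of_lt (Nat.lt_succ_self n), sum_range_succ']
    ring
  rw [signedLahNum, sum_range_succ', sum_congr rfl fun j _ => hterm j, sum_sub_distrib, ← mul_sum,
    hshift, stirFir]
  ring

lemma signedLahNum_succ_zero (n : ℕ) :
    signedLahNum r (n + 1) 0 = n * signedLahNum r n 0 := by
  have h : ∑ j ∈ range (n + 1), (-1) ^ j * stirFir r n j * stirSec r (j + 1) 0
      = r * signedLahNum r n 0 := by
    rw [signedLahNum, mul_sum]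
    exact sum_congr rfl fun j _ => by rw [stirSec]; ring
  rw [signedLahNum_succ, h]
  ring

lemma signedLahNum_succ_succ (n k : ℕ) :
    signedLahNum r (n + 1) (k + 1)
      = (n - (k + 1)) * signedLahNum r n (k + 1) - signedLahNum r n k := by
  have h : ∑ j ∈ range (n + 1), (-1) ^ j * stirFir r n j * stirSec r (j + 1) (k + 1)
      = (k + 1 + r) * signedLahNum r n (k + 1) + signedLahNum r n k := by
    rw [signedLahNum, signedLahNum, mul_sum, ← sum_add_distrib]
    exact sum_congr rfl fun j _ => by rw [stirSec]; ring
  rw [signedLahNum_succ, h]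
  ring

theorem signedLahNum_eq_zero {n k : ℕ} (h : k < n) : signedLahNum r n k = 0 := by
  induction n generalizing k with
  | zero => omega
  | succ n ih =>
    cases k with
    | zero =>
      rcases n.eq_zero_or_pos with rfl | hn
      · simp [signedLahNum_succ_zero]
      · rw [signedLahNum_succ_zero, ih hn, mul_zero]
    | succ k =>
      rcases (Nat.lt_succ_iff.mp h).eq_or_lt with rfl | hlt
      · rw [signedLahNum_succ_succ, ih (Nat.lt_succ_self k)]
        push_cast; ring
      · rw [signedLahNum_succ_succ, ih hlt, ih (by omega)]
        ring

end SignedLah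

lemma sum_filter_mod_two_eq (s : Finset ℕ) (f : ℕ → ℝ) {p : ℕ} (hp : p < 2) :
    ∑ j ∈ s.filter (· % 2 = p), f j
      = (∑ j ∈ s, f j + (-1) ^ p * ∑ j ∈ s, (-1) ^ j * f j) / 2 := by
  rw [sum_filter, mul_sum, ← sum_add_distrib, sum_div]
  refine sum_congr rfl fun j _ => ?_
  rw [← mul_assoc, ← pow_add]
  rcases Nat.even_or_odd (p + j) with h | h
  · rw [if_pos (by rw [Nat.even_iff] at h; omega), h.neg_one_pow]; ring
  · rw [if_neg (by rw [Nat.odd_iff] at h; omega), h.neg_one_pow]; ring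

section Lah

variable {r : ℝ}

lemma lahNum_eq_sum_range (n k : ℕ) :
    lahNum r n k = ∑ j ∈ range (n + 1), stirFir r n j * stirSec r j k := by
  refine sum_subset (fun j hj => by simp only [mem_Icc, mem_range] at hj ⊢; omega)
    fun j hj hjk => ?_
  rw [stirSec_eq_zero_of_lt (by simp only [mem_Icc, mem_range, not_and, not_le] at hj hjk; omega),
    mul_zero]

lemma lahNum_pos (hr : 0 ≤ r) {n k : ℕ} (hkr : 0 < k + r) (hkn : k ≤ n) :
    0 < lahNum r n k := by
  calc 0 < ((k : ℝ) + r) ^ (n - k) := by positivity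
    _ ≤ stirFir r n n * stirSec r n k := by
      rw [stirFir_self, one_mul]; exact pow_sub_le_stirSec hr hkn
    _ ≤ lahNum r n k :=
      single_le_sum (fun j _ => mul_nonneg (stirFir_nonneg hr n j) (stirSec_nonneg hr j k))
        (mem_Icc.mpr ⟨hkn, le_rfl⟩)

lemma lahPMF_nonneg (hr : 0 ≤ r) (n k j : ℕ) : 0 ≤ lahPMF r n k j :=
  div_nonneg (mul_nonneg (stirFir_nonneg hr n j) (stirSec_nonneg hr j k))
    (sum_nonneg fun i _ => mul_nonneg (stirFir_nonneg hr n i) (stirSec_nonneg hr i k))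

lemma lahPMF_eq_zero_of_lt {n k j : ℕ} (h : j < k) : lahPMF r n k j = 0 := by
  rw [lahPMF, stirSec_eq_zero_of_lt h, mul_zero, zero_div]

theorem sum_filter_lahPMF_mod_two (hr : 0 ≤ r) {n k p : ℕ} (hkr : 0 < k + r) (hkn : k < n)
    (hp : p < 2) : ∑ j ∈ (range (n + 1)).filter (· % 2 = p), lahPMF r n k j = 1 / 2 := by
  have hL := lahNum_pos hr hkr hkn.le
  have hsigned := signedLahNum_eq_zero r hkn
  simp only [lahPMF, ← sum_div]
  rw [sum_filter_mod_two_eq _ _ hp, ← lahNum_eq_sum_range]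
  simp only [← mul_assoc]
  rw [← signedLahNum, hsigned]
  field_simp
  ring

lemma sum_Icc_filter_lahPMF_add_sum_Ico_filter (hr : 0 ≤ r) {n k d p : ℕ} (hkr : 0 < k + r)
    (hkd : k < d) (hdn : d ≤ n) (hp : p < 2) :
    ∑ j ∈ (Icc k (d - 1)).filter (· % 2 = p), lahPMF r n k j
      + ∑ j ∈ (Ico d (n + 1)).filter (· % 2 = p), lahPMF r n k j = 1 / 2 := by
  have hlow : ∑ j ∈ (Icc k (d - 1)).filter (· % 2 = p), lahPMF r n k j
      = ∑ j ∈ (range d).filter (· % 2 = p), lahPMF r n k j :=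
    sum_subset (fun j hj => by simp only [mem_filter, mem_Icc, mem_range] at hj ⊢; omega)
      fun j hj hj' => lahPMF_eq_zero_of_lt
        (by simp only [mem_filter, mem_Icc, mem_range] at hj hj'; omega)
  rw [hlow, ← sum_filter_lahPMF_mod_two hr hkr (hkd.trans_le hdn) hp, sum_filter, sum_filter,
    sum_filter,     sum_range_add_sum_Ico _ (by omega)]

end Lah

lemma prod_add_le_prod_mul_exp {y z : ℝ} (hy : 0 ≤ y) (hz : 0 < z) (n : ℕ) :
    ∏ i ∈ range n, (y + i)
      ≤ (∏ i ∈ range n, (z + i)) * exp ((y - z) * ∑ i ∈ range n, (z + i)⁻¹) := by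
  rw [mul_sum, exp_sum, ← prod_mul_distrib]
  refine prod_le_prod (fun i _ => by positivity) fun i _ => ?_
  have hzi : 0 < z + i := by positivity
  calc y + i = (z + i) * ((y - z) * (z + i)⁻¹ + 1) := by field_simp; ring
    _ ≤ (z + i) * exp ((y - z) * (z + i)⁻¹) := by gcongr; exact add_one_le_exp _

lemma sum_range_inv_add_le_one_add_log {c : ℝ} (hc : 1 ≤ c) (n : ℕ) :
    ∑ i ∈ range n, (c + i)⁻¹ ≤ 1 + log n := by
  calc ∑ i ∈ range n, (c + i)⁻¹ ≤ ∑ i ∈ range n, ((i + 1 : ℕ) : ℝ)⁻¹ :=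
        sum_le_sum fun i _ => by push_cast; exact inv_anti₀ (by positivity) (by linarith)
    _ = harmonic n := by simp [harmonic]
    _ ≤ 1 + log n := harmonic_le_one_add_log n

lemma log_div_le_sum_range_inv_add {c : ℝ} (hc : 0 < c) (n : ℕ) :
    log ((c + n) / c) ≤ ∑ i ∈ range n, (c + i)⁻¹ := by
  rw [← integral_inv_of_pos hc (by positivity)]
  exact (inv_antitoneOn_Icc_right hc).integral_le_sum

lemma sum_le_sum_mul_pow_div_pow {s t : Finset ℕ} {p : ℕ → ℝ} (hst : s ⊆ t)
    (hp : ∀ j ∈ t, 0 ≤ p j) {x : ℝ} (hx : 0 < x) {m : ℕ}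
    (hm : ∀ j ∈ s, x ^ m ≤ x ^ j) :
    ∑ j ∈ s, p j ≤ (∑ j ∈ t, p j * x ^ j) / x ^ m := by
  rw [le_div_iff₀ (by positivity), sum_mul]
  calc ∑ j ∈ s, p j * x ^ m ≤ ∑ j ∈ s, p j * x ^ j :=
        sum_le_sum fun j hj => mul_le_mul_of_nonneg_left (hm j hj) (hp j (hst hj))
    _ ≤ ∑ j ∈ t, p j * x ^ j :=
        sum_le_sum_of_subset_of_nonneg hst fun j hj _ => mul_nonneg (hp j hj) (by positivity)

lemma tendsto_sum_range_inv_add_atTop {c : ℝ} (hc : 0 < c) :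
    Tendsto (fun n : ℕ => ∑ i ∈ range n, (c + i)⁻¹) atTop atTop := by
  have hlin : Tendsto (fun n : ℕ => (c + n) / c) atTop atTop :=
    (tendsto_atTop_add_const_left _ c tendsto_natCast_atTop_atTop).atTop_div_const hc
  exact tendsto_atTop_mono (log_div_le_sum_range_inv_add hc) (tendsto_log_atTop.comp hlin)

lemma mul_sub_one_lt_log_two_div {t : ℝ} (ht : -1 < t) (ht1 : t ≠ 1) :
    t * (2 / (1 + t) - 1) < log (2 / (1 + t)) := by
  have h1t : 0 < 1 + t := by linarith
  have hx : 0 < 2 / (1 + t) := by positivity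
  have hgap : 0 < (1 - t) ^ 2 / (2 * (1 + t)) :=
    div_pos (sq_pos_of_ne_zero (sub_ne_zero.mpr ht1.symm)) (by positivity)
  have := one_sub_inv_le_log_of_pos hx
  have : 1 - (2 / (1 + t))⁻¹ - t * (2 / (1 + t) - 1) = (1 - t) ^ 2 / (2 * (1 + t)) := by
    rw [inv_div]; field_simp; ring
  linarith

section LahMoments

variable {r : ℝ}

lemma sum_stirFir_mul_stirSec_mul_pow_le (hr : 0 ≤ r) {x : ℝ} (hx : 0 ≤ x) (n k : ℕ) :
    ∑ j ∈ range (n + 1), stirFir r n j * stirSec r j k * x ^ j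
      ≤ ∏ i ∈ range n, ((k + r) * x + r + i) := by
  rw [← sum_range_stirFir_mul_pow]
  refine sum_le_sum fun j _ => ?_
  rw [mul_pow, ← mul_assoc]
  gcongr ?_ * _
  exact mul_le_mul_of_nonneg_left (stirSec_le_pow hr j k) (stirFir_nonneg hr n j)

lemma sum_Icc_stirFir_mul_pow_le (hr : 0 ≤ r) (n k : ℕ) :
    ∑ j ∈ Icc k n, stirFir r n j * ((k : ℝ) + r) ^ j
      ≤ ((k : ℝ) + r) ^ k * lahNum r n k := by
  have hb : (0 : ℝ) ≤ k + r := by positivity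
  rw [lahNum, mul_sum]
  refine sum_le_sum fun j hj => ?_
  have hjk := (mem_Icc.mp hj).1
  calc stirFir r n j * ((k : ℝ) + r) ^ j = (k + r) ^ k * (stirFir r n j * (k + r) ^ (j - k)) := by
        rw [mul_left_comm, ← pow_add, Nat.add_sub_cancel' hjk]
    _ ≤ (k + r) ^ k * (stirFir r n j * stirSec r j k) := mul_le_mul_of_nonneg_left
        (mul_le_mul_of_nonneg_left (pow_sub_le_stirSec hr hjk) (stirFir_nonneg hr n j))
        (pow_nonneg hb k)

-- The lower-tail Chernoff bound at `x = 1 / 2` for the weights `stirFir r n j * b ^ j`.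
lemma sum_range_stirFir_mul_pow_le (hr : 0 ≤ r) {b : ℝ} (hb : 0 ≤ b) {n k : ℕ}
    (hkn : k ≤ n + 1) :
    ∑ j ∈ range k, stirFir r n j * b ^ j ≤ 2 ^ k * ∏ i ∈ range n, (b / 2 + r + i) := by
  calc ∑ j ∈ range k, stirFir r n j * b ^ j
      ≤ (∑ j ∈ range (n + 1), stirFir r n j * b ^ j * (1 / 2) ^ j) / (1 / 2) ^ k :=
        sum_le_sum_mul_pow_div_pow (p := fun j => stirFir r n j * b ^ j)
          (range_subset_range.mpr hkn) (fun j _ => mul_nonneg (stirFir_nonneg hr n j)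
          (by positivity)) (by norm_num) fun j hj =>
          pow_le_pow_of_le_one (by norm_num) (by norm_num) (mem_range.mp hj).le
    _ = 2 ^ k * ∑ j ∈ range (n + 1), stirFir r n j * (b / 2) ^ j := by
        rw [one_div, inv_pow, div_inv_eq_mul, mul_comm]
        exact congrArg _ (sum_congr rfl fun j _ => by rw [div_eq_mul_inv, mul_pow, mul_assoc])
    _ = 2 ^ k * ∏ i ∈ range n, (b / 2 + r + i) := by rw [sum_range_stirFir_mul_pow]

lemma eventually_prod_le_two_mul_lahNum (hr : 0 ≤ r) {k : ℕ} (hkr : 0 < k + r) :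
    ∀ᶠ n in atTop, ∏ i ∈ range n, (k + r + r + i) ≤ 2 * (k + r) ^ k * lahNum r n k := by
  set b : ℝ := k + r
  have hsmall :
      ∀ᶠ n in atTop, 2 ^ k * exp (-(b / 2) * ∑ i ∈ range n, (b + r + i)⁻¹) ≤ 1 / 2 := by
    have hH := (tendsto_sum_range_inv_add_atTop (by positivity : 0 < b + r)).const_mul_atTop
      (by positivity : 0 < b / 2)
    have hexp := (tendsto_exp_neg_atTop_nhds_zero.comp hH).const_mul (2 ^ k)
    rw [mul_zero] at hexp
    exact (hexp.eventually (eventually_le_nhds (by norm_num : (0 : ℝ) < 1 / 2))).mono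
      fun n hn => by simpa using hn
  filter_upwards [hsmall, eventually_ge_atTop k] with n hn hkn
  have hsplit : ∏ i ∈ range n, (b + r + i)
      = ∑ j ∈ range k, stirFir r n j * b ^ j + ∑ j ∈ Icc k n, stirFir r n j * b ^ j := by
    rw [← sum_range_stirFir_mul_pow, ← sum_range_add_sum_Ico _ (by omega : k ≤ n + 1),
      Ico_add_one_right_eq_Icc]
  have hlow := sum_range_stirFir_mul_pow_le hr hkr.le (by omega : k ≤ n + 1)
  have hratio :=
    prod_add_le_prod_mul_exp (by positivity : 0 ≤ b / 2 + r) (by positivity : 0 < b + r) n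
  rw [show b / 2 + r - (b + r) = -(b / 2) by ring] at hratio
  have hP : 0 ≤ ∏ i ∈ range n, (b + r + i) := by positivity
  have := mul_le_mul_of_nonneg_left hratio (by positivity : (0 : ℝ) ≤ 2 ^ k)
  have := mul_le_mul_of_nonneg_left hn hP
  nlinarith [sum_Icc_stirFir_mul_pow_le hr n k]

theorem eventually_sum_lahPMF_mul_pow_le (hr : 0 ≤ r) {k : ℕ} (hkr : 0 < k + r) :
    ∀ᶠ n in atTop, ∀ x, 0 ≤ x → ∑ j ∈ range (n + 1), lahPMF r n k j * x ^ j
      ≤ 2 * (k + r) ^ k * exp ((k + r) * (x - 1) * ∑ i ∈ range n, (k + r + r + i)⁻¹) := by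
  filter_upwards [eventually_prod_le_two_mul_lahNum hr hkr, eventually_ge_atTop k]
    with n hP hkn x hx
  have hL := lahNum_pos hr hkr hkn
  simp only [lahPMF, div_mul_eq_mul_div, ← sum_div]
  rw [div_le_iff₀ hL]
  calc ∑ j ∈ range (n + 1), stirFir r n j * stirSec r j k * x ^ j
      ≤ ∏ i ∈ range n, ((k + r) * x + r + i) := sum_stirFir_mul_stirSec_mul_pow_le hr hx n k
    _ ≤ (∏ i ∈ range n, (k + r + r + i))
          * exp (((k + r) * x + r - (k + r + r)) * ∑ i ∈ range n, (k + r + r + i)⁻¹) :=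
        prod_add_le_prod_mul_exp (by positivity) (by positivity) n
    _ ≤ 2 * (k + r) ^ k * lahNum r n k
          * exp (((k + r) * x + r - (k + r + r)) * ∑ i ∈ range n, (k + r + r + i)⁻¹) := by
        gcongr
    _ = _ := by rw [show (k + r) * x + r - (k + r + r) = (k + r) * (x - 1) by ring]; ring

lemma tendsto_zero_of_le_two_mul_sum_lahPMF (hr : 0 ≤ r) {k : ℕ} (hkr : 0 < k + r)
    {n : ℕ → ℕ} (hn : Tendsto n atTop atTop) {x β K : ℝ} (hx : 0 < x)
    (hlog : (k + r) * β * (x - 1) < log x)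
    (hH : ∀ᶠ d in atTop,
      (x - 1) * ∑ i ∈ range (n d), ((k : ℝ) + r + r + i)⁻¹ ≤ (x - 1) * (β * d) + K)
    {u : ℕ → ℝ} {s : ℕ → Finset ℕ}
    (hs : ∀ᶠ d in atTop, s d ⊆ range (n d + 1) ∧ ∀ j ∈ s d, x ^ d ≤ x ^ j)
    (hu : ∀ᶠ d in atTop, 0 ≤ u d ∧ u d ≤ 2 * ∑ j ∈ s d, lahPMF r (n d) k j) :
    Tendsto u atTop (nhds 0) := by
  set b : ℝ := k + r
  set q : ℝ := exp (b * β * (x - 1)) / x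
  have hq1 : q < 1 := (div_lt_one hx).mpr (by simpa [exp_log hx] using exp_lt_exp.mpr hlog)
  have hgeom := (tendsto_pow_atTop_nhds_zero_of_lt_one (by positivity) hq1).const_mul
    (4 * b ^ k * exp (b * K))
  rw [mul_zero] at hgeom
  refine squeeze_zero' (hu.mono fun d h => h.1) ?_ hgeom
  filter_upwards [hn.eventually (eventually_sum_lahPMF_mul_pow_le hr hkr), hH, hs, hu]
    with d hmgf hHd hsd hud
  calc u d ≤ 2 * ∑ j ∈ s d, lahPMF r (n d) k j := hud.2
    _ ≤ 2 * ((∑ j ∈ range (n d + 1), lahPMF r (n d) k j * x ^ j) / x ^ d) := by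
        gcongr
        exact sum_le_sum_mul_pow_div_pow hsd.1 (fun j _ => lahPMF_nonneg hr _ _ _) hx hsd.2
    _ ≤ 2 * (2 * b ^ k * exp (b * ((x - 1) * ∑ i ∈ range (n d), (b + r + i)⁻¹)) / x ^ d) := by
        rw [← mul_assoc b]
        gcongr
        exact hmgf x hx.le
    _ ≤ 2 * (2 * b ^ k * exp (b * ((x - 1) * (β * d) + K)) / x ^ d) := by gcongr
    _ = 4 * b ^ k * exp (b * K) * q ^ d := by
        have hsplit : exp (b * ((x - 1) * (β * d) + K))
            = exp (b * K) * exp (d * (b * β * (x - 1))) := by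
          rw [← exp_add]; ring_nf
        rw [div_pow, ← exp_nat_mul, hsplit]
        ring

end LahMoments

section WeakThreshold

/-- The paper's `F(d) = E f_k(C^B_{n(d)}) / C(n(d), k)`. -/
noncomputable def faceRatio (k : ℕ) (n : ℕ → ℕ) (d : ℕ) : ℝ :=
  2 * ∑ j ∈ (Icc k (d - 1)).filter (fun j => j % 2 = (d - 1) % 2), lahPMF (1 / 2) (n d) k j

variable {k : ℕ} {n : ℕ → ℕ} {γ : EReal}

lemma eventually_log_lt_mul_of_lt
    (hγ : Tendsto (fun d : ℕ => ((log (n d) / (d : ℝ) : ℝ) : EReal)) atTop (nhds γ))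
    {β : ℝ} (h : γ < β) : ∀ᶠ d in atTop, log (n d) < β * d := by
  filter_upwards [hγ.eventually_lt_const h, eventually_gt_atTop 0] with d hd hd0
  exact (div_lt_iff₀ (by exact_mod_cast hd0)).mp (EReal.coe_lt_coe_iff.mp hd)

lemma eventually_mul_lt_log_of_lt
    (hγ : Tendsto (fun d : ℕ => ((log (n d) / (d : ℝ) : ℝ) : EReal)) atTop (nhds γ))
    {β : ℝ} (h : (β : EReal) < γ) : ∀ᶠ d in atTop, β * d < log (n d) := by
  filter_upwards [hγ.eventually_const_lt h, eventually_gt_atTop 0] with d hd hd0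
  exact (lt_div_iff₀ (by exact_mod_cast hd0)).mp (EReal.coe_lt_coe_iff.mp hd)

lemma tendsto_faceRatio_one (hn : ∀ d, d ≤ n d) {β : ℝ} (hβ0 : 0 ≤ β)
    (hβ : (k + 1 / 2) * β < 1) (hlog : ∀ᶠ d in atTop, log (n d) < β * d) :
    Tendsto (faceRatio k n) atTop (nhds 1) := by
  set t : ℝ := (k + 1 / 2) * β
  set x : ℝ := 2 / (1 + t)
  have ht0 : 0 ≤ t := by positivity
  have hx1 : 1 < x := (one_lt_div (by linarith)).mpr (by linarith)
  have key : Tendsto (fun d => 1 - faceRatio k n d) atTop (nhds 0) := by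
    refine tendsto_zero_of_le_two_mul_sum_lahPMF (r := 1 / 2) (by norm_num) (by positivity)
      (tendsto_atTop_mono hn tendsto_id) (by linarith)
      (mul_sub_one_lt_log_two_div (show -1 < t by linarith) hβ.ne) (K := x - 1)
      (s := fun d => Ico d (n d + 1)) ?_ ?_ ?_
    · filter_upwards [hlog] with d hd
      calc (x - 1) * ∑ i ∈ range (n d), ((k : ℝ) + 1 / 2 + 1 / 2 + i)⁻¹
          ≤ (x - 1) * (1 + log (n d)) := mul_le_mul_of_nonneg_left
            (sum_range_inv_add_le_one_add_log (by linarith) _) (by linarith)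
        _ ≤ (x - 1) * (β * d) + (x - 1) := by nlinarith
    · exact Eventually.of_forall fun d => ⟨fun j hj => mem_range.mpr (mem_Ico.mp hj).2,
        fun j hj => pow_le_pow_right₀ hx1.le (mem_Ico.mp hj).1⟩
    · filter_upwards [eventually_gt_atTop k] with d hkd
      have hhalf := sum_Icc_filter_lahPMF_add_sum_Ico_filter (r := 1 / 2) (by norm_num)
        (by positivity) hkd (hn d) (Nat.mod_lt (d - 1) two_pos)
      have hnonneg : ∀ j, 0 ≤ lahPMF (1 / 2) (n d) k j := lahPMF_nonneg (by norm_num) (n d) k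
      have hle := sum_le_sum_of_subset_of_nonneg
        (filter_subset (· % 2 = (d - 1) % 2) (Ico d (n d + 1))) fun j _ _ => hnonneg j
      have := sum_nonneg fun j (_ : j ∈ (Ico d (n d + 1)).filter (· % 2 = (d - 1) % 2)) =>
        hnonneg j
      rw [faceRatio]
      constructor <;> linarith
  simpa using (tendsto_const_nhds (x := (1 : ℝ))).sub key

lemma tendsto_faceRatio_zero (hn : ∀ d, d ≤ n d) {β : ℝ} (hβ : 1 < (k + 1 / 2) * β)
    (hlog : ∀ᶠ d in atTop, β * d < log (n d)) : Tendsto (faceRatio k n) atTop (nhds 0) := by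
  set t : ℝ := (k + 1 / 2) * β
  set x : ℝ := 2 / (1 + t)
  set c : ℝ := k + 1 / 2 + 1 / 2
  have hx0 : 0 < x := by positivity
  have hx1 : x < 1 := (div_lt_one (by linarith)).mpr (by linarith)
  refine tendsto_zero_of_le_two_mul_sum_lahPMF (r := 1 / 2) (by norm_num) (by positivity)
    (tendsto_atTop_mono hn tendsto_id) hx0
    (mul_sub_one_lt_log_two_div (show -1 < t by linarith) hβ.ne') (K := -(x - 1) * log c)
    (s := range) ?_ ?_ ?_
  · filter_upwards [hlog, eventually_ge_atTop 1] with d hd hd1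
    have hn0 : (0 : ℝ) < n d := by exact_mod_cast hd1.trans (hn d)
    have hc : 0 < c := by positivity
    have hH := log_div_le_sum_range_inv_add hc (n d)
    rw [log_div (by positivity) hc.ne'] at hH
    have := log_le_log hn0 (by linarith : (n d : ℝ) ≤ c + n d)
    nlinarith
  · exact Eventually.of_forall fun d => ⟨range_subset_range.mpr (by have := hn d; omega),
      fun j hj => pow_le_pow_of_le_one hx0.le hx1.le (mem_range.mp hj).le⟩
  · filter_upwards [eventually_gt_atTop k] with d hkd
    have hsub : (Icc k (d - 1)).filter (· % 2 = (d - 1) % 2) ⊆ range d :=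
      fun j hj => by simp only [mem_filter, mem_Icc, mem_range] at hj ⊢; omega
    have hnonneg : ∀ j, 0 ≤ lahPMF (1 / 2) (n d) k j := lahPMF_nonneg (by norm_num) (n d) k
    rw [faceRatio]
    exact ⟨mul_nonneg two_pos.le (sum_nonneg fun j _ => hnonneg j), by
      gcongr 2 * ?_; exact sum_le_sum_of_subset_of_nonneg hsub fun j _ _ => hnonneg j⟩

end WeakThreshold

theorem weak_threshold (k : ℕ) (n : ℕ → ℕ) (hn : ∀ d, d ≤ n d) (γ : EReal)
    (hγ : Tendsto (fun d : ℕ => ((Real.log (n d) / (d : ℝ) : ℝ) : EReal)) atTop (nhds γ)) :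
    (γ < (((1 / ((k : ℝ) + 1 / 2)) : ℝ) : EReal) →
      Tendsto (fun d : ℕ =>
          2 * ∑ j ∈ (Finset.Icc k (d - 1)).filter (fun j => j % 2 = (d - 1) % 2),
            lahPMF (1 / 2) (n d) k j)
        atTop (nhds 1)) ∧
    ((((1 / ((k : ℝ) + 1 / 2)) : ℝ) : EReal) < γ →
      Tendsto (fun d : ℕ =>
          2 * ∑ j ∈ (Finset.Icc k (d - 1)).filter (fun j => j % 2 = (d - 1) % 2),
            lahPMF (1 / 2) (n d) k j)
        atTop (nhds 0)) := by
  have hb : (0 : ℝ) < k + 1 / 2 := by positivity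
  refine ⟨fun hlt => ?_, fun hgt => ?_⟩
  · obtain ⟨β, hγβ, hβ⟩ := EReal.exists_between_coe_real hlt
    have hβ' : max β 0 < 1 / ((k : ℝ) + 1 / 2) :=
      max_lt (EReal.coe_lt_coe_iff.mp hβ) (by positivity)
    exact tendsto_faceRatio_one hn (le_max_right β 0) ((lt_div_iff₀' hb).mp hβ')
      (eventually_log_lt_mul_of_lt hγ
        (hγβ.trans_le (EReal.coe_le_coe_iff.mpr (le_max_left β 0))))
  · obtain ⟨β, hβ, hβγ⟩ := EReal.exists_between_coe_real hgt
    exact tendsto_faceRatio_zero hn ((div_lt_iff₀' hb).mp (EReal.coe_lt_coe_iff.mp hβ))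
      (eventually_mul_lt_log_of_lt hγ hβγ)
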